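/- arXiv:0910.0606 — 13 statements merged into one kernel-verified Lean document; each statement's English description precedes it below -/
import Mathlib

section
/- Assume u₁₂u₁₃ ≠ 0 and h₂ ≠ h₃, and let L, M be as defined. Then the nonzero vector v = (0, u₁₃, −u₁₂)ᵀ satisfies (L·I + M·A + B)·v = 0; that is, the kernel of L·I + M·A + B contains a nonzero vector whose first coordinate is zero. -/
open Matrix

/-- the nonzero vector (0, u₁₃, −u₁₂)ᵀ lies in the kernel of
L·I + M·A + B. -/
theorem kernel_vector_at_distinguished_point
    (h₁ h₂ h₃ : ℂ) (B : Matrix (Fin 3) (Fin 3) ℂ)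
    (A : Matrix (Fin 3) (Fin 3) ℂ) (hA : A = Matrix.diagonal ![h₁, h₂, h₃])
    (hu : B 0 1 * B 0 2 ≠ 0) (h23 : h₂ ≠ h₃)
    (L M : ℂ)
    (hL : L = (B 0 1 * h₃ * (B 0 1 * B 1 2 - B 0 2 * B 1 1)
        + B 0 2 * h₂ * (B 0 1 * B 2 2 - B 0 2 * B 2 1))
        / (B 0 1 * B 0 2 * (h₃ - h₂)))
    (hM : M = -(B 0 1 * (B 0 1 * B 1 2 - B 0 2 * B 1 1)
        + B 0 2 * (B 0 1 * B 2 2 - B 0 2 * B 2 1))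
        / (B 0 1 * B 0 2 * (h₃ - h₂))) :
    (![(0 : ℂ), B 0 2, -(B 0 1)] ≠ 0)
    ∧ (L • (1 : Matrix (Fin 3) (Fin 3) ℂ) + M • A + B).mulVec
        ![(0 : ℂ), B 0 2, -(B 0 1)] = 0 := by
  have h12 : B 0 1 ≠ 0 := fun h => hu (by rw [h, zero_mul])
  have h13 : B 0 2 ≠ 0 := fun h => hu (by rw [h, mul_zero])
  have hd : h₃ - h₂ ≠ 0 := sub_ne_zero.mpr (Ne.symm h23)
  constructor
  · intro h
    exact h13 (by simpa using congrFun h 1)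
  · funext i
    fin_cases i <;>
      simp [hA, mulVec, dotProduct, Fin.sum_univ_three, hL, hM, diagonal,
        Matrix.one_apply] <;>
      (try field_simp) <;> ring_nf
end

section
/- Assume u₁₂u₁₃ ≠ 0 and h₂ ≠ h₃, and let L, M be as defined. Then det(L·I + M·A + B) = 0; that is, the point with projective coordinates (L : M : 1) lies on the spectral curve det(λI + μA + νB) = 0 of the pair (A,B). -/
open Matrix

/-- the distinguished point (L : M : 1) lies on the spectral
curve, i.e. det(L·I + M·A + B) = 0. -/
theorem distinguished_point_on_spectral_curve
    (h₁ h₂ h₃ : ℂ) (B : Matrix (Fin 3) (Fin 3) ℂ)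
    (A : Matrix (Fin 3) (Fin 3) ℂ) (hA : A = Matrix.diagonal ![h₁, h₂, h₃])
    (hu : B 0 1 * B 0 2 ≠ 0) (h23 : h₂ ≠ h₃)
    (L M : ℂ)
    (hL : L = (B 0 1 * h₃ * (B 0 1 * B 1 2 - B 0 2 * B 1 1)
        + B 0 2 * h₂ * (B 0 1 * B 2 2 - B 0 2 * B 2 1))
        / (B 0 1 * B 0 2 * (h₃ - h₂)))
    (hM : M = -(B 0 1 * (B 0 1 * B 1 2 - B 0 2 * B 1 1)
        + B 0 2 * (B 0 1 * B 2 2 - B 0 2 * B 2 1))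
        / (B 0 1 * B 0 2 * (h₃ - h₂))) :
    (L • (1 : Matrix (Fin 3) (Fin 3) ℂ) + M • A + B).det = 0 := by
  have hb1 : B 0 1 ≠ 0 := fun h => hu (by rw [h]; ring)
  have hb2 : B 0 2 ≠ 0 := fun h => hu (by rw [h]; ring)
  have h32 : h₃ - h₂ ≠ 0 := sub_ne_zero.mpr (Ne.symm h23)
  subst hA hL hM
  rw [det_fin_three]
  simp [Matrix.add_apply, Matrix.smul_apply, Matrix.one_apply, Matrix.diagonal,
    Matrix.of_apply, smul_eq_mul]
  field_simp
  ring
end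

section
/- Assume u₁₂u₁₃ ≠ 0 and h₂ ≠ h₃, and let L, M be as defined. If λ, μ, ν ∈ ℂ with ν ≠ 0 and there exists (v₂, v₃) ≠ (0,0) such that (λI + μA + νB)·(0, v₂, v₃)ᵀ = 0, then λ = L·ν and μ = M·ν. In other words, up to scaling, (L : M : 1) is the unique point with ν ≠ 0 at which the kernel of λI + μA + νB contains a nonzero vector with vanishing first coordinate. -/
open Matrix

/-- uniqueness of the distinguished point. If ν ≠ 0 and the
kernel of λI + μA + νB contains a nonzero vector with vanishing first
coordinate, then λ = L·ν and μ = M·ν. -/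
theorem distinguished_point_unique
    (h₁ h₂ h₃ : ℂ) (B : Matrix (Fin 3) (Fin 3) ℂ)
    (A : Matrix (Fin 3) (Fin 3) ℂ) (hA : A = Matrix.diagonal ![h₁, h₂, h₃])
    (hu : B 0 1 * B 0 2 ≠ 0) (h23 : h₂ ≠ h₃)
    (L M : ℂ)
    (hL : L = (B 0 1 * h₃ * (B 0 1 * B 1 2 - B 0 2 * B 1 1)
        + B 0 2 * h₂ * (B 0 1 * B 2 2 - B 0 2 * B 2 1))
        / (B 0 1 * B 0 2 * (h₃ - h₂)))
    (hM : M = -(B 0 1 * (B 0 1 * B 1 2 - B 0 2 * B 1 1)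
        + B 0 2 * (B 0 1 * B 2 2 - B 0 2 * B 2 1))
        / (B 0 1 * B 0 2 * (h₃ - h₂)))
    (lam mu nu : ℂ) (hnu : nu ≠ 0)
    (v₂ v₃ : ℂ) (hv : ¬(v₂ = 0 ∧ v₃ = 0))
    (hker : (lam • (1 : Matrix (Fin 3) (Fin 3) ℂ) + mu • A + nu • B).mulVec
        ![(0 : ℂ), v₂, v₃] = 0) :
    lam = L * nu ∧ mu = M * nu := by
  have hb1 : B 0 1 ≠ 0 := fun h => hu (by rw [h]; ring)
  have hb2 : B 0 2 ≠ 0 := fun h => hu (by rw [h]; ring)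
  have hd : h₃ - h₂ ≠ 0 := sub_ne_zero.mpr (Ne.symm h23)
  have hD : B 0 1 * B 0 2 * (h₃ - h₂) ≠ 0 := mul_ne_zero hu hd
  have e0 := congrFun hker 0
  have e1 := congrFun hker 1
  have e2 := congrFun hker 2
  simp [hA, Matrix.mulVec, dotProduct, Fin.sum_univ_three,
    Matrix.diagonal, Matrix.one_apply] at e0 e1 e2
  have hv2 : v₂ ≠ 0 := by
    intro h
    apply hv
    refine ⟨h, ?_⟩
    rw [h] at e0
    simpa [hnu, hb2] using e0
  have hv3eq : v₃ * B 0 2 = -(B 0 1 * v₂) :=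
    mul_left_cancel₀ hnu (by linear_combination e0)
  have E1 : (lam + mu * h₂ + nu * B 1 1) * B 0 2 - nu * B 1 2 * B 0 1 = 0 :=
    mul_right_cancel₀ hv2 (by
      show _ * v₂ = 0 * v₂
      linear_combination B 0 2 * e1 - nu * B 1 2 * hv3eq)
  have E2 : nu * B 2 1 * B 0 2 - (lam + mu * h₃ + nu * B 2 2) * B 0 1 = 0 :=
    mul_right_cancel₀ hv2 (by
      show _ * v₂ = 0 * v₂
      linear_combination B 0 2 * e2 - (lam + mu * h₃ + nu * B 2 2) * hv3eq)
  subst hL hM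
  constructor
  · rw [div_mul_eq_mul_div, eq_div_iff hD]
    linear_combination h₃ * B 0 1 * E1 + h₂ * B 0 2 * E2
  · rw [neg_div, neg_mul, div_mul_eq_mul_div, eq_comm, neg_eq_iff_eq_neg, div_eq_iff hD, eq_comm]
    linear_combination B 0 1 * E1 + B 0 2 * E2
end

section
/- Assume u₁₂u₁₃ ≠ 0 and h₂ ≠ h₃. Let D = diag(d₁, d₂, d₃) be an invertible diagonal 3×3 matrix and let B' = D B D⁻¹, with entries u'_{ij} = d_i u_{ij} d_j⁻¹. Then the quantities L and M computed from the entries u'_{ij} of B' (with the same h₁, h₂, h₃) are equal to L and M computed from the entries u_{ij} of B. Hence the point (L : M : 1) depends only on the pair (A,B) up to simultaneous conjugation preserving the diagonal form of A and the ordering of its eigenvalues. -/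
open Matrix

/-- the quantities L and M are invariant under conjugation of B
by an invertible diagonal matrix D = diag(d₁,d₂,d₃). -/
theorem distinguished_point_invariant_under_diagonal_conjugation
    (h₁ h₂ h₃ : ℂ) (B : Matrix (Fin 3) (Fin 3) ℂ)
    (hu : B 0 1 * B 0 2 ≠ 0) (h23 : h₂ ≠ h₃)
    (d₁ d₂ d₃ : ℂ) (hd₁ : d₁ ≠ 0) (hd₂ : d₂ ≠ 0) (hd₃ : d₃ ≠ 0)
    (B' : Matrix (Fin 3) (Fin 3) ℂ)
    (hB' : B' = Matrix.diagonal ![d₁, d₂, d₃] * B * Matrix.diagonal ![d₁⁻¹, d₂⁻¹, d₃⁻¹])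
    (L M L' M' : ℂ)
    (hL : L = (B 0 1 * h₃ * (B 0 1 * B 1 2 - B 0 2 * B 1 1)
        + B 0 2 * h₂ * (B 0 1 * B 2 2 - B 0 2 * B 2 1))
        / (B 0 1 * B 0 2 * (h₃ - h₂)))
    (hM : M = -(B 0 1 * (B 0 1 * B 1 2 - B 0 2 * B 1 1)
        + B 0 2 * (B 0 1 * B 2 2 - B 0 2 * B 2 1))
        / (B 0 1 * B 0 2 * (h₃ - h₂)))
    (hL' : L' = (B' 0 1 * h₃ * (B' 0 1 * B' 1 2 - B' 0 2 * B' 1 1)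
        + B' 0 2 * h₂ * (B' 0 1 * B' 2 2 - B' 0 2 * B' 2 1))
        / (B' 0 1 * B' 0 2 * (h₃ - h₂)))
    (hM' : M' = -(B' 0 1 * (B' 0 1 * B' 1 2 - B' 0 2 * B' 1 1)
        + B' 0 2 * (B' 0 1 * B' 2 2 - B' 0 2 * B' 2 1))
        / (B' 0 1 * B' 0 2 * (h₃ - h₂))) :
    L' = L ∧ M' = M := by
  have e : ∀ i j, B' i j = (![d₁,d₂,d₃] i) * B i j * (![d₁⁻¹,d₂⁻¹,d₃⁻¹] j) := by
    intro i j
    rw [hB', Matrix.mul_diagonal, Matrix.diagonal_mul]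
  have h01 := e 0 1; have h02 := e 0 2; have h12 := e 1 2
  have h11 := e 1 1; have h22 := e 2 2; have h21 := e 2 1
  simp only [Matrix.cons_val_zero, Matrix.cons_val_one, Matrix.head_cons,
    Matrix.cons_val_two, Matrix.tail_cons] at h01 h02 h12 h11 h22 h21
  have cnz : d₁ * d₁ * (d₂⁻¹ * d₃⁻¹) ≠ 0 :=
    mul_ne_zero (mul_ne_zero hd₁ hd₁) (mul_ne_zero (inv_ne_zero hd₂) (inv_ne_zero hd₃))
  have k2 : d₂ * d₂⁻¹ = 1 := mul_inv_cancel₀ hd₂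
  have k3 : d₃ * d₃⁻¹ = 1 := mul_inv_cancel₀ hd₃
  have eN : d₁ * B 0 1 * d₂⁻¹ * h₃ * (d₁ * B 0 1 * d₂⁻¹ * (d₂ * B 1 2 * d₃⁻¹)
        - d₁ * B 0 2 * d₃⁻¹ * (d₂ * B 1 1 * d₂⁻¹))
      + d₁ * B 0 2 * d₃⁻¹ * h₂ * (d₁ * B 0 1 * d₂⁻¹ * (d₃ * B 2 2 * d₃⁻¹)
        - d₁ * B 0 2 * d₃⁻¹ * (d₃ * B 2 1 * d₂⁻¹))
      = d₁ * d₁ * (d₂⁻¹ * d₃⁻¹) * (B 0 1 * h₃ * (B 0 1 * B 1 2 - B 0 2 * B 1 1)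
        + B 0 2 * h₂ * (B 0 1 * B 2 2 - B 0 2 * B 2 1)) := by
    linear_combination (d₁ * d₁ * (d₂⁻¹ * d₃⁻¹))
        * (B 0 1 ^ 2 * h₃ * B 1 2 - B 0 1 * B 0 2 * h₃ * B 1 1) * k2
      + (d₁ * d₁ * (d₂⁻¹ * d₃⁻¹))
        * (B 0 1 * B 0 2 * h₂ * B 2 2 - B 0 2 ^ 2 * h₂ * B 2 1) * k3
  have eN2 : d₁ * B 0 1 * d₂⁻¹ * (d₁ * B 0 1 * d₂⁻¹ * (d₂ * B 1 2 * d₃⁻¹)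
        - d₁ * B 0 2 * d₃⁻¹ * (d₂ * B 1 1 * d₂⁻¹))
      + d₁ * B 0 2 * d₃⁻¹ * (d₁ * B 0 1 * d₂⁻¹ * (d₃ * B 2 2 * d₃⁻¹)
        - d₁ * B 0 2 * d₃⁻¹ * (d₃ * B 2 1 * d₂⁻¹))
      = d₁ * d₁ * (d₂⁻¹ * d₃⁻¹) * (B 0 1 * (B 0 1 * B 1 2 - B 0 2 * B 1 1)
        + B 0 2 * (B 0 1 * B 2 2 - B 0 2 * B 2 1)) := by
    linear_combination (d₁ * d₁ * (d₂⁻¹ * d₃⁻¹))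
        * (B 0 1 ^ 2 * B 1 2 - B 0 1 * B 0 2 * B 1 1) * k2
      + (d₁ * d₁ * (d₂⁻¹ * d₃⁻¹))
        * (B 0 1 * B 0 2 * B 2 2 - B 0 2 ^ 2 * B 2 1) * k3
  have eD : d₁ * B 0 1 * d₂⁻¹ * (d₁ * B 0 2 * d₃⁻¹) * (h₃ - h₂)
      = d₁ * d₁ * (d₂⁻¹ * d₃⁻¹) * (B 0 1 * B 0 2 * (h₃ - h₂)) := by ring
  constructor
  · rw [hL', hL, h01, h02, h12, h11, h22, h21, eN, eD, mul_div_mul_left _ _ cnz]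
  · rw [hM', hM, h01, h02, h12, h11, h22, h21, eN2, eD, neg_div, neg_div,
      mul_div_mul_left _ _ cnz]
end

section
/- Assume h₁, h₂, h₃ are pairwise distinct and u₁₂ = u₁₃ = 1, and let L, M be as defined. Then u₂₃ = L + h₂M + (q₊h₂² − t·h₂ + r₊)/((h₂−h₁)(h₂−h₃)); that is, the entry u₂₃ of B is recovered from the spectral coefficients q₊, r₊, t and the distinguished point (L : M : 1). -/
open Matrix

/-- recovery of u₂₃ from the spectral coefficients and the
distinguished point, when u₁₂ = u₁₃ = 1 and h₁, h₂, h₃ are pairwise distinct. -/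
theorem entry_u23_from_spectral_data
    (h₁ h₂ h₃ : ℂ) (B : Matrix (Fin 3) (Fin 3) ℂ)
    (h12 : h₁ ≠ h₂) (h13 : h₁ ≠ h₃) (h23 : h₂ ≠ h₃)
    (hu12 : B 0 1 = 1) (hu13 : B 0 2 = 1)
    (qP rP t : ℂ)
    (hqP : qP = B 0 0 + B 1 1 + B 2 2)
    (hrP : rP = h₁ * h₂ * B 2 2 + h₁ * h₃ * B 1 1 + h₂ * h₃ * B 0 0)
    (ht : t = (h₁ + h₂) * B 2 2 + (h₁ + h₃) * B 1 1 + (h₂ + h₃) * B 0 0)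
    (L M : ℂ)
    (hL : L = (B 0 1 * h₃ * (B 0 1 * B 1 2 - B 0 2 * B 1 1)
        + B 0 2 * h₂ * (B 0 1 * B 2 2 - B 0 2 * B 2 1))
        / (B 0 1 * B 0 2 * (h₃ - h₂)))
    (hM : M = -(B 0 1 * (B 0 1 * B 1 2 - B 0 2 * B 1 1)
        + B 0 2 * (B 0 1 * B 2 2 - B 0 2 * B 2 1))
        / (B 0 1 * B 0 2 * (h₃ - h₂))) :
    B 1 2 = L + h₂ * M + (qP * h₂ ^ 2 - t * h₂ + rP) / ((h₂ - h₁) * (h₂ - h₃)) := by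
  subst hqP hrP ht hL hM
  rw [hu12, hu13]
  have d1 : h₃ - h₂ ≠ 0 := sub_ne_zero.mpr (Ne.symm h23)
  have d2 : h₂ - h₁ ≠ 0 := sub_ne_zero.mpr (Ne.symm h12)
  have d3 : h₂ - h₃ ≠ 0 := sub_ne_zero.mpr h23
  field_simp
  ring
end

section
/- Assume h₁, h₂, h₃ are pairwise distinct and u₁₂ = u₁₃ = 1, and let L, M be as defined. Then u₃₂ = L + h₃M + (q₊h₃² − t·h₃ + r₊)/((h₃−h₁)(h₃−h₂)); that is, the entry u₃₂ of B is recovered from the spectral coefficients q₊, r₊, t and the distinguished point (L : M : 1). -/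
open Matrix

/-- recovery of u₃₂ from the spectral coefficients and the
distinguished point, when u₁₂ = u₁₃ = 1 and h₁, h₂, h₃ are pairwise distinct. -/
theorem entry_u32_from_spectral_data
    (h₁ h₂ h₃ : ℂ) (B : Matrix (Fin 3) (Fin 3) ℂ)
    (h12 : h₁ ≠ h₂) (h13 : h₁ ≠ h₃) (h23 : h₂ ≠ h₃)
    (hu12 : B 0 1 = 1) (hu13 : B 0 2 = 1)
    (qP rP t : ℂ)
    (hqP : qP = B 0 0 + B 1 1 + B 2 2)
    (hrP : rP = h₁ * h₂ * B 2 2 + h₁ * h₃ * B 1 1 + h₂ * h₃ * B 0 0)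
    (ht : t = (h₁ + h₂) * B 2 2 + (h₁ + h₃) * B 1 1 + (h₂ + h₃) * B 0 0)
    (L M : ℂ)
    (hL : L = (B 0 1 * h₃ * (B 0 1 * B 1 2 - B 0 2 * B 1 1)
        + B 0 2 * h₂ * (B 0 1 * B 2 2 - B 0 2 * B 2 1))
        / (B 0 1 * B 0 2 * (h₃ - h₂)))
    (hM : M = -(B 0 1 * (B 0 1 * B 1 2 - B 0 2 * B 1 1)
        + B 0 2 * (B 0 1 * B 2 2 - B 0 2 * B 2 1))
        / (B 0 1 * B 0 2 * (h₃ - h₂))) :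
    B 2 1 = L + h₃ * M + (qP * h₃ ^ 2 - t * h₃ + rP) / ((h₃ - h₁) * (h₃ - h₂)) := by
  have d1 : h₃ - h₂ ≠ 0 := sub_ne_zero.mpr (Ne.symm h23)
  have d2 : h₃ - h₁ ≠ 0 := sub_ne_zero.mpr (Ne.symm h13)
  subst hqP hrP ht hL hM
  rw [hu12, hu13]
  field_simp
  ring
end

section
/- Assume h₁, h₂, h₃ are pairwise distinct and u₁₂ = u₁₃ = 1, and let L, M be as defined. Then u₂₁ = ((h₁−h₂)/(h₂−h₃))·(L+h₂M)(L+h₃M) + (M/((h₁−h₃)(h₂−h₃)))·(r₊(h₁−h₂−h₃) − q₊h₁h₂h₃ + t·h₂h₃) + (L/((h₁−h₃)(h₂−h₃)))·(q₊(h₂h₃−h₁h₂−h₁h₃) − r₊ + t·h₁) + (r₋ − q₋h₂)/(h₂−h₃) + (q₊h₂² − t·h₂ + r₊)(q₊h₁² − t·h₁ + r₊)/((h₁−h₂)²(h₃−h₁)(h₂−h₃)); that is, the entry u₂₁ of B is recovered from the spectral coefficients and the distinguished point (L : M : 1). -/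
set_option maxHeartbeats 4000000
open Matrix

/-- recovery of u₂₁ from the spectral coefficients and the
distinguished point, when u₁₂ = u₁₃ = 1 and h₁, h₂, h₃ are pairwise distinct. -/
theorem entry_u21_from_spectral_data
    (h₁ h₂ h₃ : ℂ) (B : Matrix (Fin 3) (Fin 3) ℂ)
    (h12 : h₁ ≠ h₂) (h13 : h₁ ≠ h₃) (h23 : h₂ ≠ h₃)
    (hu12 : B 0 1 = 1) (hu13 : B 0 2 = 1)
    (qP qMi rP rMi t : ℂ)
    (hqP : qP = B 0 0 + B 1 1 + B 2 2)
    (hqMi : qMi = (B 0 0 * B 1 1 - B 0 1 * B 1 0) + (B 0 0 * B 2 2 - B 0 2 * B 2 0)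
        + (B 1 1 * B 2 2 - B 1 2 * B 2 1))
    (hrP : rP = h₁ * h₂ * B 2 2 + h₁ * h₃ * B 1 1 + h₂ * h₃ * B 0 0)
    (hrMi : rMi = h₃ * (B 0 0 * B 1 1 - B 0 1 * B 1 0) + h₂ * (B 0 0 * B 2 2 - B 0 2 * B 2 0)
        + h₁ * (B 1 1 * B 2 2 - B 1 2 * B 2 1))
    (ht : t = (h₁ + h₂) * B 2 2 + (h₁ + h₃) * B 1 1 + (h₂ + h₃) * B 0 0)
    (L M : ℂ)
    (hL : L = (B 0 1 * h₃ * (B 0 1 * B 1 2 - B 0 2 * B 1 1)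
        + B 0 2 * h₂ * (B 0 1 * B 2 2 - B 0 2 * B 2 1))
        / (B 0 1 * B 0 2 * (h₃ - h₂)))
    (hM : M = -(B 0 1 * (B 0 1 * B 1 2 - B 0 2 * B 1 1)
        + B 0 2 * (B 0 1 * B 2 2 - B 0 2 * B 2 1))
        / (B 0 1 * B 0 2 * (h₃ - h₂))) :
    B 1 0 = (h₁ - h₂) / (h₂ - h₃) * ((L + h₂ * M) * (L + h₃ * M))
      + M / ((h₁ - h₃) * (h₂ - h₃))
          * (rP * (h₁ - h₂ - h₃) - qP * h₁ * h₂ * h₃ + t * h₂ * h₃)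
      + L / ((h₁ - h₃) * (h₂ - h₃))
          * (qP * (h₂ * h₃ - h₁ * h₂ - h₁ * h₃) - rP + t * h₁)
      + (rMi - qMi * h₂) / (h₂ - h₃)
      + (qP * h₂ ^ 2 - t * h₂ + rP) * (qP * h₁ ^ 2 - t * h₁ + rP)
          / ((h₁ - h₂) ^ 2 * (h₃ - h₁) * (h₂ - h₃)) := by
  have e12 : h₁ - h₂ ≠ 0 := sub_ne_zero.mpr h12
  have e13 : h₁ - h₃ ≠ 0 := sub_ne_zero.mpr h13
  have e23 : h₂ - h₃ ≠ 0 := sub_ne_zero.mpr h23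
  have e32 : h₃ - h₂ ≠ 0 := sub_ne_zero.mpr (Ne.symm h23)
  have e31 : h₃ - h₁ ≠ 0 := sub_ne_zero.mpr (Ne.symm h13)
  have hL' : L * (h₃ - h₂) = h₃ * (B 1 2 - B 1 1) + h₂ * (B 2 2 - B 2 1) := by
    rw [hL, hu12, hu13]; field_simp
  have hM' : M * (h₃ - h₂) = -((B 1 2 - B 1 1) + (B 2 2 - B 2 1)) := by
    rw [hM, hu12, hu13]; field_simp
  have hLv : L = (h₃ * (B 1 2 - B 1 1) + h₂ * (B 2 2 - B 2 1)) / (h₃ - h₂) := by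
    rw [eq_div_iff e32]; exact hL'
  have hMv : M = -((B 1 2 - B 1 1) + (B 2 2 - B 2 1)) / (h₃ - h₂) := by
    rw [eq_div_iff e32]; exact hM'
  subst hqP hqMi hrP hrMi ht hLv hMv
  rw [hu12, hu13]
  rw [show h₃ - h₂ = -(h₂ - h₃) by ring, show h₃ - h₁ = -(h₁ - h₃) by ring]
  obtain ⟨x, hx⟩ : ∃ x, h₁ - h₂ = x := ⟨_, rfl⟩
  obtain ⟨y, hy⟩ : ∃ y, h₂ - h₃ = y := ⟨_, rfl⟩
  obtain ⟨z, hz⟩ : ∃ z, h₁ - h₃ = z := ⟨_, rfl⟩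
  have hxne : x ≠ 0 := hx ▸ e12
  have hyne : y ≠ 0 := hy ▸ e23
  have hzne : z ≠ 0 := hz ▸ e13
  rw [hx, hy, hz]
  have hD : x ^ 2 * y ^ 4 * z ≠ 0 :=
    mul_ne_zero (mul_ne_zero (pow_ne_zero _ hxne) (pow_ne_zero _ hyne)) hzne
  apply mul_right_cancel₀ hD
  have e1 : ∀ P Q u v : ℂ, x / y * ((P / -y + u * (Q / -y)) * (P / -y + v * (Q / -y)))
      * (x ^ 2 * y ^ 4 * z) = x ^ 3 * y * z * ((P + u * Q) * (P + v * Q)) := by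
    intro P Q u v; field_simp; ring
  have e2 : ∀ a b : ℂ, a / -y / (z * y) * b * (x ^ 2 * y ^ 4 * z)
      = -(a * b) * (x ^ 2 * y ^ 2) := by
    intro a b; field_simp
  have e4 : ∀ a : ℂ, a / y * (x ^ 2 * y ^ 4 * z) = a * (x ^ 2 * y ^ 3 * z) := by
    intro a; field_simp
  have e5 : ∀ a : ℂ, a / (x ^ 2 * -z * y) * (x ^ 2 * y ^ 4 * z) = -(a * y ^ 3) := by
    intro a; field_simp
  rw [add_mul, add_mul, add_mul, add_mul, e1, e2, e2, e4, e5]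
  rw [← hx, ← hy, ← hz]
  ring
end

section
/- Assume h₁, h₂, h₃ are pairwise distinct and u₁₂ = u₁₃ = 1, and let L, M be as defined. Then u₃₁ = ((h₁−h₃)/(h₃−h₂))·(L+h₂M)(L+h₃M) + (M/((h₁−h₂)(h₃−h₂)))·(r₊(h₁−h₂−h₃) − q₊h₁h₂h₃ + t·h₂h₃) + (L/((h₁−h₂)(h₃−h₂)))·(q₊(h₂h₃−h₁h₂−h₁h₃) − r₊ + t·h₁) + (r₋ − q₋h₃)/(h₃−h₂) + (q₊h₃² − t·h₃ + r₊)(q₊h₁² − t·h₁ + r₊)/((h₁−h₃)²(h₂−h₁)(h₃−h₂)); that is, the entry u₃₁ of B is recovered from the spectral coefficients and the distinguished point (L : M : 1). -/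
/-!
The coefficient of `ν` in `det(λI + μA + νB)` is the quadratic form
`q₊λ² + tλμ + r₊μ² = ∑ᵢ uᵢᵢ ∏_{j ≠ i} (λ + hⱼμ)`, and the coefficient of `ν²` is the linear form
`q₋λ + r₋μ = ∑_{i<j} mᵢⱼ (λ + hₖμ)` with `mᵢⱼ` the principal `2 × 2` minors and `k` the third
index. Evaluating these forms at suitable points isolates `u₁₁ u₃₃`, `u₂₂`, `u₃₃`, `m₁₃` and `m₂₃`,
and reduces the right-hand side to an expression in `L + h₂M` and `L + h₃M` plus
`u₁₁u₃₃ - m₁₃ = u₁₃u₃₁`. For the distinguished point these two values are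
`u₁₂u₂₃/u₁₃ - u₂₂` and `u₁₃u₃₂/u₁₂ - u₃₃`, which makes the remaining expression vanish.
-/

namespace PencilSpectralData

variable {K : Type*} [Field K] (h₁ h₂ h₃ : K) (B : Matrix (Fin 3) (Fin 3) K)

def principalMinor (i j : Fin 3) : K := B i i * B j j - B i j * B j i

def qPlus : K := B 0 0 + B 1 1 + B 2 2

def qMinus : K := principalMinor B 0 1 + principalMinor B 0 2 + principalMinor B 1 2

def rPlus : K := h₁ * h₂ * B 2 2 + h₁ * h₃ * B 1 1 + h₂ * h₃ * B 0 0

def rMinus : K :=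
  h₃ * principalMinor B 0 1 + h₂ * principalMinor B 0 2 + h₁ * principalMinor B 1 2

def tCoeff : K := (h₁ + h₂) * B 2 2 + (h₁ + h₃) * B 1 1 + (h₂ + h₃) * B 0 0

def pointL : K :=
  (B 0 1 * h₃ * (B 0 1 * B 1 2 - B 0 2 * B 1 1) + B 0 2 * h₂ * (B 0 1 * B 2 2 - B 0 2 * B 2 1))
    / (B 0 1 * B 0 2 * (h₃ - h₂))

def pointM : K :=
  -(B 0 1 * (B 0 1 * B 1 2 - B 0 2 * B 1 1) + B 0 2 * (B 0 1 * B 2 2 - B 0 2 * B 2 1))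
    / (B 0 1 * B 0 2 * (h₃ - h₂))

theorem qPlus_mul_sq_sub_tCoeff_mul_add_rPlus (x : K) :
    qPlus B * x ^ 2 - tCoeff h₁ h₂ h₃ B * x + rPlus h₁ h₂ h₃ B
      = (x - h₂) * (x - h₃) * B 0 0 + (x - h₁) * (x - h₃) * B 1 1
        + (x - h₁) * (x - h₂) * B 2 2 := by
  unfold qPlus tCoeff rPlus
  ring

theorem rMinus_sub_qMinus_mul (x : K) :
    rMinus h₁ h₂ h₃ B - qMinus B * x
      = (h₃ - x) * principalMinor B 0 1 + (h₂ - x) * principalMinor B 0 2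
        + (h₁ - x) * principalMinor B 1 2 := by
  unfold rMinus qMinus
  ring

theorem coeff_isolating_diag_sum :
    qPlus B * (h₂ * h₃ - h₁ * h₂ - h₁ * h₃) - rPlus h₁ h₂ h₃ B + tCoeff h₁ h₂ h₃ B * h₁
      = (h₁ - h₂) * (h₁ - h₃) * (B 1 1 + B 2 2) := by
  unfold qPlus tCoeff rPlus
  ring

theorem coeff_isolating_weighted_diag_sum :
    rPlus h₁ h₂ h₃ B * (h₁ - h₂ - h₃) - qPlus B * h₁ * h₂ * h₃ + tCoeff h₁ h₂ h₃ B * h₂ * h₃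
      = (h₁ - h₂) * (h₁ - h₃) * (h₂ * B 2 2 + h₃ * B 1 1) := by
  unfold qPlus tCoeff rPlus
  ring

variable {h₁ h₂ h₃}

theorem recovery_formula_eq (h12 : h₁ ≠ h₂) (h13 : h₁ ≠ h₃) (h23 : h₂ ≠ h₃) (L M : K) :
    (h₁ - h₃) / (h₃ - h₂) * ((L + h₂ * M) * (L + h₃ * M))
      + M / ((h₁ - h₂) * (h₃ - h₂))
          * (rPlus h₁ h₂ h₃ B * (h₁ - h₂ - h₃) - qPlus B * h₁ * h₂ * h₃
            + tCoeff h₁ h₂ h₃ B * h₂ * h₃)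
      + L / ((h₁ - h₂) * (h₃ - h₂))
          * (qPlus B * (h₂ * h₃ - h₁ * h₂ - h₁ * h₃) - rPlus h₁ h₂ h₃ B + tCoeff h₁ h₂ h₃ B * h₁)
      + (rMinus h₁ h₂ h₃ B - qMinus B * h₃) / (h₃ - h₂)
      + (qPlus B * h₃ ^ 2 - tCoeff h₁ h₂ h₃ B * h₃ + rPlus h₁ h₂ h₃ B)
          * (qPlus B * h₁ ^ 2 - tCoeff h₁ h₂ h₃ B * h₁ + rPlus h₁ h₂ h₃ B)
          / ((h₁ - h₃) ^ 2 * (h₂ - h₁) * (h₃ - h₂))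
      = (h₁ - h₃) / (h₃ - h₂) * ((L + h₂ * M + B 1 1) * (L + h₃ * M + B 2 2) - B 1 2 * B 2 1)
        + (B 0 0 * B 2 2 - principalMinor B 0 2) := by
  rw [coeff_isolating_weighted_diag_sum, coeff_isolating_diag_sum, rMinus_sub_qMinus_mul,
    qPlus_mul_sq_sub_tCoeff_mul_add_rPlus, qPlus_mul_sq_sub_tCoeff_mul_add_rPlus]
  have d12 : h₁ - h₂ ≠ 0 := sub_ne_zero.mpr h12
  have d13 : h₁ - h₃ ≠ 0 := sub_ne_zero.mpr h13
  have d32 : h₃ - h₂ ≠ 0 := sub_ne_zero.mpr h23.symm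
  have d21 : h₂ - h₁ ≠ 0 := sub_ne_zero.mpr h12.symm
  unfold principalMinor
  field_simp
  ring

theorem pointL_add_h₂_mul_pointM (h23 : h₂ ≠ h₃) (hu12 : B 0 1 ≠ 0) (hu13 : B 0 2 ≠ 0) :
    pointL h₂ h₃ B + h₂ * pointM h₂ h₃ B + B 1 1 = B 0 1 * B 1 2 / B 0 2 := by
  have d32 : h₃ - h₂ ≠ 0 := sub_ne_zero.mpr h23.symm
  unfold pointL pointM
  field_simp
  ring

theorem pointL_add_h₃_mul_pointM (h23 : h₂ ≠ h₃) (hu12 : B 0 1 ≠ 0) (hu13 : B 0 2 ≠ 0) :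
    pointL h₂ h₃ B + h₃ * pointM h₂ h₃ B + B 2 2 = B 0 2 * B 2 1 / B 0 1 := by
  have d32 : h₃ - h₂ ≠ 0 := sub_ne_zero.mpr h23.symm
  unfold pointL pointM
  field_simp
  ring

end PencilSpectralData

open PencilSpectralData in
/-- recovery of u₃₁ from the spectral coefficients and the
distinguished point, when u₁₂ = u₁₃ = 1 and h₁, h₂, h₃ are pairwise distinct. -/
theorem entry_u31_from_spectral_data
    (h₁ h₂ h₃ : ℂ) (B : Matrix (Fin 3) (Fin 3) ℂ)
    (h12 : h₁ ≠ h₂) (h13 : h₁ ≠ h₃) (h23 : h₂ ≠ h₃)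
    (hu12 : B 0 1 = 1) (hu13 : B 0 2 = 1)
    (qP qMi rP rMi t : ℂ)
    (hqP : qP = B 0 0 + B 1 1 + B 2 2)
    (hqMi : qMi = (B 0 0 * B 1 1 - B 0 1 * B 1 0) + (B 0 0 * B 2 2 - B 0 2 * B 2 0)
        + (B 1 1 * B 2 2 - B 1 2 * B 2 1))
    (hrP : rP = h₁ * h₂ * B 2 2 + h₁ * h₃ * B 1 1 + h₂ * h₃ * B 0 0)
    (hrMi : rMi = h₃ * (B 0 0 * B 1 1 - B 0 1 * B 1 0) + h₂ * (B 0 0 * B 2 2 - B 0 2 * B 2 0)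
        + h₁ * (B 1 1 * B 2 2 - B 1 2 * B 2 1))
    (ht : t = (h₁ + h₂) * B 2 2 + (h₁ + h₃) * B 1 1 + (h₂ + h₃) * B 0 0)
    (L M : ℂ)
    (hL : L = (B 0 1 * h₃ * (B 0 1 * B 1 2 - B 0 2 * B 1 1)
        + B 0 2 * h₂ * (B 0 1 * B 2 2 - B 0 2 * B 2 1))
        / (B 0 1 * B 0 2 * (h₃ - h₂)))
    (hM : M = -(B 0 1 * (B 0 1 * B 1 2 - B 0 2 * B 1 1)
        + B 0 2 * (B 0 1 * B 2 2 - B 0 2 * B 2 1))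
        / (B 0 1 * B 0 2 * (h₃ - h₂))) :
    B 2 0 = (h₁ - h₃) / (h₃ - h₂) * ((L + h₂ * M) * (L + h₃ * M))
      + M / ((h₁ - h₂) * (h₃ - h₂))
          * (rP * (h₁ - h₂ - h₃) - qP * h₁ * h₂ * h₃ + t * h₂ * h₃)
      + L / ((h₁ - h₂) * (h₃ - h₂))
          * (qP * (h₂ * h₃ - h₁ * h₂ - h₁ * h₃) - rP + t * h₁)
      + (rMi - qMi * h₃) / (h₃ - h₂)
      + (qP * h₃ ^ 2 - t * h₃ + rP) * (qP * h₁ ^ 2 - t * h₁ + rP)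
          / ((h₁ - h₃) ^ 2 * (h₂ - h₁) * (h₃ - h₂)) := by
  obtain rfl : qP = qPlus B := hqP
  obtain rfl : qMi = qMinus B := hqMi
  obtain rfl : rP = rPlus h₁ h₂ h₃ B := hrP
  obtain rfl : rMi = rMinus h₁ h₂ h₃ B := hrMi
  obtain rfl : t = tCoeff h₁ h₂ h₃ B := ht
  obtain rfl : L = pointL h₂ h₃ B := hL
  obtain rfl : M = pointM h₂ h₃ B := hM
  have hu12' : B 0 1 ≠ 0 := by simp [hu12]
  have hu13' : B 0 2 ≠ 0 := by simp [hu13]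
  rw [recovery_formula_eq B h12 h13 h23, pointL_add_h₂_mul_pointM B h23 hu12' hu13',
    pointL_add_h₃_mul_pointM B h23 hu12' hu13', principalMinor, hu12, hu13]
  ring
end

section
/- (Injectivity of spectral data.) Assume h₁, h₂, h₃ are pairwise distinct. Let B = (u_{ij}) and B' = (u'_{ij}) be 3×3 complex matrices with u₁₂ = u₁₃ = u'₁₂ = u'₁₃ = 1. If the spectral polynomials coincide, det(λI + μA + νB) = det(λI + μA + νB') for all λ, μ, ν ∈ ℂ, and the distinguished points coincide, (L, M) computed from B equals (L, M) computed from B', then B = B'. -/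
open Matrix

/-- injectivity of spectral data. Two matrices B, B' with
u₁₂ = u₁₃ = 1 having the same spectral polynomial (with respect to
A = diag(h₁,h₂,h₃), h₁,h₂,h₃ pairwise distinct) and the same distinguished
point (L, M) coincide. -/
theorem spectral_data_injective
    (h₁ h₂ h₃ : ℂ)
    (h12 : h₁ ≠ h₂) (h13 : h₁ ≠ h₃) (h23 : h₂ ≠ h₃)
    (A : Matrix (Fin 3) (Fin 3) ℂ) (hA : A = Matrix.diagonal ![h₁, h₂, h₃])
    (B B' : Matrix (Fin 3) (Fin 3) ℂ)
    (hB12 : B 0 1 = 1) (hB13 : B 0 2 = 1)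
    (hB'12 : B' 0 1 = 1) (hB'13 : B' 0 2 = 1)
    (L M L' M' : ℂ)
    (hL : L = (B 0 1 * h₃ * (B 0 1 * B 1 2 - B 0 2 * B 1 1)
        + B 0 2 * h₂ * (B 0 1 * B 2 2 - B 0 2 * B 2 1))
        / (B 0 1 * B 0 2 * (h₃ - h₂)))
    (hM : M = -(B 0 1 * (B 0 1 * B 1 2 - B 0 2 * B 1 1)
        + B 0 2 * (B 0 1 * B 2 2 - B 0 2 * B 2 1))
        / (B 0 1 * B 0 2 * (h₃ - h₂)))
    (hL' : L' = (B' 0 1 * h₃ * (B' 0 1 * B' 1 2 - B' 0 2 * B' 1 1)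
        + B' 0 2 * h₂ * (B' 0 1 * B' 2 2 - B' 0 2 * B' 2 1))
        / (B' 0 1 * B' 0 2 * (h₃ - h₂)))
    (hM' : M' = -(B' 0 1 * (B' 0 1 * B' 1 2 - B' 0 2 * B' 1 1)
        + B' 0 2 * (B' 0 1 * B' 2 2 - B' 0 2 * B' 2 1))
        / (B' 0 1 * B' 0 2 * (h₃ - h₂)))
    (hdet : ∀ lam mu nu : ℂ,
      (lam • (1 : Matrix (Fin 3) (Fin 3) ℂ) + mu • A + nu • B).det
        = (lam • (1 : Matrix (Fin 3) (Fin 3) ℂ) + mu • A + nu • B').det)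
    (hLeq : L = L') (hMeq : M = M') :
    B = B' := by
  subst hA
  have h32 : h₃ - h₂ ≠ 0 := sub_ne_zero.mpr h23.symm
  have t00 := hdet 0 0 1
  have t10 := hdet 1 0 1
  have t20 := hdet 2 0 1
  have t01 := hdet 0 1 1
  have t02 := hdet 0 2 1
  have t11 := hdet 1 1 1
  simp [Matrix.det_fin_three, Matrix.add_apply, Matrix.smul_apply, Matrix.one_apply,
    Matrix.diagonal_apply, hB12, hB13, hB'12, hB'13] at t00 t10 t20 t01 t02 t11
  -- trace of B
  have hc1 : B 0 0 + B 1 1 + B 2 2 = B' 0 0 + B' 1 1 + B' 2 2 := by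
    linear_combination (t20 - 2*t10 + t00)/2
  -- weighted trace
  have hc2 : h₁ * B 0 0 + h₂ * B 1 1 + h₃ * B 2 2
      = h₁ * B' 0 0 + h₂ * B' 1 1 + h₃ * B' 2 2 := by
    linear_combination (h₁+h₂+h₃) * hc1 - (t11 - t10 - t01 + t00)
  have hc7 : h₂*h₃ * B 0 0 + h₁*h₃ * B 1 1 + h₁*h₂ * B 2 2
      = h₂*h₃ * B' 0 0 + h₁*h₃ * B' 1 1 + h₁*h₂ * B' 2 2 := by
    linear_combination (t02 - 2*t01 + t00)/2
  have d12 : h₁ - h₂ ≠ 0 := sub_ne_zero.mpr h12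
  have d13 : h₁ - h₃ ≠ 0 := sub_ne_zero.mpr h13
  have d23 : h₂ - h₃ ≠ 0 := sub_ne_zero.mpr h23
  have ha : B 0 0 = B' 0 0 := by
    have key : (h₁-h₂)*((h₁-h₃)*(B 0 0 - B' 0 0)) = 0 := by
      linear_combination (-h₁*(h₂+h₃))*hc1 + h₁*hc2 + hc7
    rcases mul_eq_zero.mp key with h | h
    · exact absurd h d12
    rcases mul_eq_zero.mp h with h | h
    · exact absurd h d13
    · exact sub_eq_zero.mp h
  have hcc : B 1 1 = B' 1 1 := by
    have key : (h₁-h₂)*((h₂-h₃)*(B 1 1 - B' 1 1)) = 0 := by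
      linear_combination (h₂*(h₁+h₃))*hc1 - h₂*hc2 - hc7
    rcases mul_eq_zero.mp key with h | h
    · exact absurd h d12
    rcases mul_eq_zero.mp h with h | h
    · exact absurd h d23
    · exact sub_eq_zero.mp h
  have hgg : B 2 2 = B' 2 2 := by
    have key : (h₁-h₃)*((h₂-h₃)*(B 2 2 - B' 2 2)) = 0 := by
      linear_combination (-h₃*(h₁+h₂))*hc1 + h₃*hc2 + hc7
    rcases mul_eq_zero.mp key with h | h
    · exact absurd h d13
    rcases mul_eq_zero.mp h with h | h
    · exact absurd h d23
    · exact sub_eq_zero.mp h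
  -- L, M equations
  rw [hL, hB12, hB13] at hLeq
  rw [hL', hB'12, hB'13] at hLeq
  rw [hM, hB12, hB13] at hMeq
  rw [hM', hB'12, hB'13] at hMeq
  rw [div_eq_div_iff (by simpa using h32) (by simpa using h32)] at hLeq hMeq
  have hd : B 1 2 = B' 1 2 := by
    have key : (h₃-h₂)*((h₃-h₂)*(B 1 2 - B' 1 2)) = 0 := by
      linear_combination hLeq + h₂ * hMeq + (h₃-h₂)^2 * hcc
    rcases mul_eq_zero.mp key with h | h
    · exact absurd h h32
    rcases mul_eq_zero.mp h with h | h
    · exact absurd h h32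
    · exact sub_eq_zero.mp h
  have hf : B 2 1 = B' 2 1 := by
    have key : (h₃-h₂)*((h₃-h₂)*(B 2 1 - B' 2 1)) = 0 := by
      linear_combination hLeq + h₃ * hMeq + (h₃-h₂)^2 * hgg
    rcases mul_eq_zero.mp key with h | h
    · exact absurd h h32
    rcases mul_eq_zero.mp h with h | h
    · exact absurd h h32
    · exact sub_eq_zero.mp h
  -- second elementary symmetric / weighted minors
  have hc3 : B 0 0 * B 1 1 - B 1 0 + (B 0 0 * B 2 2 - B 2 0)
        + (B 1 1 * B 2 2 - B 1 2 * B 2 1)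
      = B' 0 0 * B' 1 1 - B' 1 0 + (B' 0 0 * B' 2 2 - B' 2 0)
        + (B' 1 1 * B' 2 2 - B' 1 2 * B' 2 1) := by
    linear_combination (-(t20) + 4*t10 - 3*t00)/2
  have hc6 : h₁ * (B 1 1 * B 2 2 - B 1 2 * B 2 1) + h₂ * (B 0 0 * B 2 2 - B 2 0)
        + h₃ * (B 0 0 * B 1 1 - B 1 0)
      = h₁ * (B' 1 1 * B' 2 2 - B' 1 2 * B' 2 1) + h₂ * (B' 0 0 * B' 2 2 - B' 2 0)
        + h₃ * (B' 0 0 * B' 1 1 - B' 1 0) := by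
    linear_combination (-(t02) + 4*t01 - 3*t00)/2
  rw [ha, hcc, hgg, hd, hf] at hc3 hc6
  have hb : B 1 0 = B' 1 0 := by
    have key : (h₃-h₂)*(B 1 0 - B' 1 0) = 0 := by
      linear_combination h₂*hc3 - hc6
    rcases mul_eq_zero.mp key with h | h
    · exact absurd h h32
    · exact sub_eq_zero.mp h
  have he : B 2 0 = B' 2 0 := by
    have key : (h₃-h₂)*(B 2 0 - B' 2 0) = 0 := by
      linear_combination -h₃*hc3 + hc6
    rcases mul_eq_zero.mp key with h | h
    · exact absurd h h32
    · exact sub_eq_zero.mp h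
  ext i j
  fin_cases i <;> fin_cases j
  · exact ha
  · exact hB12.trans hB'12.symm
  · exact hB13.trans hB'13.symm
  · exact hb
  · exact hcc
  · exact hd
  · exact he
  · exact hf
  · exact hgg
end

section
/- (Inversion of the first matrix: the remaining coefficients.) Assume h₁, h₂, h₃ are all nonzero, so that A is invertible with A⁻¹ = diag(h₁⁻¹, h₂⁻¹, h₃⁻¹). Write det(λI + μA⁻¹ + νB) = λ³ + d̃₁μ³ + d̃₂ν³ + p̃₊λ²μ + p̃₋λμ² + q̃₊λ²ν + q̃₋λν² + r̃₊μ²ν + r̃₋μν² + t̃·λμν. Then d̃₁ = 1/d₁, d̃₂ = d₂, p̃₊ = p₋/d₁, p̃₋ = p₊/d₁, q̃₊ = q₊, and q̃₋ = q₋. -/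
open Matrix

lemma det_smul_one_add_smul_diagonal (l m a b c : ℂ) :
    (l • (1 : Matrix (Fin 3) (Fin 3) ℂ) + m • Matrix.diagonal ![a, b, c]).det
      = (l + m * a) * (l + m * b) * (l + m * c) := by
  simp [Matrix.det_fin_three, Matrix.one_apply, Matrix.diagonal]

/-- inversion of the first matrix, the coefficients dTilde₁, dTilde₂,
pTildeP, pTildeM, qTildeP, qTildeM of det(λI + μA⁻¹ + νB). -/
theorem inversion_remaining_coefficients
    (h₁ h₂ h₃ : ℂ) (B : Matrix (Fin 3) (Fin 3) ℂ)
    (h₁0 : h₁ ≠ 0) (h₂0 : h₂ ≠ 0) (h₃0 : h₃ ≠ 0)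
    (A : Matrix (Fin 3) (Fin 3) ℂ) (hA : A = Matrix.diagonal ![h₁, h₂, h₃])
    (Ainv : Matrix (Fin 3) (Fin 3) ℂ)
    (hAinv : Ainv = Matrix.diagonal ![h₁⁻¹, h₂⁻¹, h₃⁻¹])
    (d₁ d₂ pP pMi qP qMi rP rMi t : ℂ)
    (hspec : ∀ lam mu nu : ℂ,
      (lam • (1 : Matrix (Fin 3) (Fin 3) ℂ) + mu • A + nu • B).det
        = lam ^ 3 + d₁ * mu ^ 3 + d₂ * nu ^ 3
          + pP * lam ^ 2 * mu + pMi * lam * mu ^ 2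
          + qP * lam ^ 2 * nu + qMi * lam * nu ^ 2
          + rP * mu ^ 2 * nu + rMi * mu * nu ^ 2
          + t * lam * mu * nu)
    (dTilde₁ dTilde₂ pTildeP pTildeM qTildeP qTildeM rTildeP rTildeM tTilde : ℂ)
    (hspec' : ∀ lam mu nu : ℂ,
      (lam • (1 : Matrix (Fin 3) (Fin 3) ℂ) + mu • Ainv + nu • B).det
        = lam ^ 3 + dTilde₁ * mu ^ 3 + dTilde₂ * nu ^ 3
          + pTildeP * lam ^ 2 * mu + pTildeM * lam * mu ^ 2
          + qTildeP * lam ^ 2 * nu + qTildeM * lam * nu ^ 2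
          + rTildeP * mu ^ 2 * nu + rTildeM * mu * nu ^ 2
          + tTilde * lam * mu * nu) :
    dTilde₁ = 1 / d₁ ∧ dTilde₂ = d₂ ∧ pTildeP = pMi / d₁ ∧ pTildeM = pP / d₁
      ∧ qTildeP = qP ∧ qTildeM = qMi := by
  -- Specialization with ν = 0 for A
  have H : ∀ l m : ℂ, (l + m * h₁) * (l + m * h₂) * (l + m * h₃)
      = l ^ 3 + d₁ * m ^ 3 + pP * l ^ 2 * m + pMi * l * m ^ 2 := by
    intro l m
    have e := hspec l m 0
    simp only [zero_smul, add_zero, hA] at e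
    rw [det_smul_one_add_smul_diagonal] at e
    linear_combination e
  -- Specialization with ν = 0 for A⁻¹
  have H' : ∀ l m : ℂ, (l + m * h₁⁻¹) * (l + m * h₂⁻¹) * (l + m * h₃⁻¹)
      = l ^ 3 + dTilde₁ * m ^ 3 + pTildeP * l ^ 2 * m + pTildeM * l * m ^ 2 := by
    intro l m
    have e := hspec' l m 0
    simp only [zero_smul, add_zero, hAinv] at e
    rw [det_smul_one_add_smul_diagonal] at e
    linear_combination e
  -- Specialization with μ = 0: both families agree
  have G : ∀ l n : ℂ,
      l ^ 3 + d₂ * n ^ 3 + qP * l ^ 2 * n + qMi * l * n ^ 2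
        = l ^ 3 + dTilde₂ * n ^ 3 + qTildeP * l ^ 2 * n + qTildeM * l * n ^ 2 := by
    intro l n
    have e := hspec l 0 n
    have e' := hspec' l 0 n
    simp only [zero_smul, add_zero] at e e'
    linear_combination e' - e
  have hd₁ : d₁ = h₁ * h₂ * h₃ := by linear_combination (-1 : ℂ) * H 0 1
  have hd₁' : dTilde₁ = h₁⁻¹ * h₂⁻¹ * h₃⁻¹ := by linear_combination (-1 : ℂ) * H' 0 1
  have hpP : pP = h₁ + h₂ + h₃ := by
    linear_combination (H 1 (-1) - H 1 1) / 2 - hd₁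
  have hpMi : pMi = h₁ * h₂ + h₁ * h₃ + h₂ * h₃ := by
    linear_combination (-1 : ℂ) * (H 1 1 + H 1 (-1)) / 2
  have hpP' : pTildeP = h₁⁻¹ + h₂⁻¹ + h₃⁻¹ := by
    linear_combination (H' 1 (-1) - H' 1 1) / 2 - hd₁'
  have hpMi' : pTildeM = h₁⁻¹ * h₂⁻¹ + h₁⁻¹ * h₃⁻¹ + h₂⁻¹ * h₃⁻¹ := by
    linear_combination (-1 : ℂ) * (H' 1 1 + H' 1 (-1)) / 2
  have hd₂ : dTilde₂ = d₂ := by linear_combination - G 0 1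
  have hqP : qTildeP = qP := by
    linear_combination (G 1 (-1) - G 1 1) / 2 - hd₂
  have hqM : qTildeM = qMi := by
    linear_combination - (G 1 1 + G 1 (-1)) / 2
  refine ⟨?_, hd₂, ?_, ?_, hqP, hqM⟩
  · rw [hd₁', hd₁]; field_simp
  · rw [hpP', hpMi, hd₁]; field_simp; ring
  · rw [hpMi', hpP, hd₁]; field_simp; ring
end

section
/- (Inversion of the first matrix: transformation of the distinguished point.) Assume u₁₂u₁₃ ≠ 0, h₂ ≠ h₃, and h₁, h₂, h₃ are all nonzero. Let L̃ and M̃ denote the quantities L and M computed with h₁, h₂, h₃ replaced by h₁⁻¹, h₂⁻¹, h₃⁻¹ (and the same entries u_{ij}), i.e. the distinguished point of the pair (A⁻¹, B). Then L̃ = L + M(h₂+h₃) and M̃ = −h₂h₃M. -/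
/-!
Since `h₃⁻¹ - h₂⁻¹ = -(h₃ - h₂) / (h₂h₃)`, inverting `h₂, h₃` turns a quotient `x / (u₁₂u₁₃(h₃ - h₂))`
into `-h₂h₃` times it; this gives `M̃ = -h₂h₃M` at once. For `L̃`, multiplying the new numerator
`u₁₂h₃⁻¹X + u₁₃h₂⁻¹Y` by `-h₂h₃` gives `-(h₂u₁₂X + h₃u₁₃Y)`, which is exactly the numerator of
`L + M(h₂ + h₃)` over the common denominator `u₁₂u₁₃(h₃ - h₂)`
(here `X = u₁₂u₂₃ - u₁₃u₂₂`, `Y = u₁₂u₃₃ - u₁₃u₃₂`).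
-/

variable {K : Type*} [Field K]

theorem div_mul_inv_sub_inv (x d : K) {a b : K} (ha : a ≠ 0) (hb : b ≠ 0) :
    x / (d * (b⁻¹ - a⁻¹)) = -(a * b) * (x / (d * (b - a))) := by
  have hden : d * (b⁻¹ - a⁻¹) = d * (b - a) / -(a * b) := by
    field_simp
    ring
  rw [hden, div_div_eq_mul_div]
  ring

-- `(distinguishedL h₂ h₃ B, distinguishedM h₂ h₃ B)` is the distinguished point `(L, M)` of the pair
-- `(diag(h₁, h₂, h₃), B)`.
def distinguishedL (h₂ h₃ : K) (B : Matrix (Fin 3) (Fin 3) K) : K :=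
  (B 0 1 * h₃ * (B 0 1 * B 1 2 - B 0 2 * B 1 1) + B 0 2 * h₂ * (B 0 1 * B 2 2 - B 0 2 * B 2 1))
    / (B 0 1 * B 0 2 * (h₃ - h₂))

def distinguishedM (h₂ h₃ : K) (B : Matrix (Fin 3) (Fin 3) K) : K :=
  -(B 0 1 * (B 0 1 * B 1 2 - B 0 2 * B 1 1) + B 0 2 * (B 0 1 * B 2 2 - B 0 2 * B 2 1))
    / (B 0 1 * B 0 2 * (h₃ - h₂))

theorem distinguishedM_inv {h₂ h₃ : K} (h₂0 : h₂ ≠ 0) (h₃0 : h₃ ≠ 0)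
    (B : Matrix (Fin 3) (Fin 3) K) :
    distinguishedM h₂⁻¹ h₃⁻¹ B = -(h₂ * h₃) * distinguishedM h₂ h₃ B :=
  div_mul_inv_sub_inv _ _ h₂0 h₃0

theorem distinguishedL_inv {h₂ h₃ : K} (h₂0 : h₂ ≠ 0) (h₃0 : h₃ ≠ 0)
    (B : Matrix (Fin 3) (Fin 3) K) :
    distinguishedL h₂⁻¹ h₃⁻¹ B =
      distinguishedL h₂ h₃ B + distinguishedM h₂ h₃ B * (h₂ + h₃) := by
  rw [distinguishedL, div_mul_inv_sub_inv _ _ h₂0 h₃0, distinguishedL, distinguishedM]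
  field_simp
  ring

theorem inversion_distinguished_point_general
    (h₂ h₃ : ℂ) (B : Matrix (Fin 3) (Fin 3) ℂ)
    (h₂0 : h₂ ≠ 0) (h₃0 : h₃ ≠ 0)
    (L M Ltil Mtil : ℂ)
    (hL : L = (B 0 1 * h₃ * (B 0 1 * B 1 2 - B 0 2 * B 1 1)
        + B 0 2 * h₂ * (B 0 1 * B 2 2 - B 0 2 * B 2 1))
        / (B 0 1 * B 0 2 * (h₃ - h₂)))
    (hM : M = -(B 0 1 * (B 0 1 * B 1 2 - B 0 2 * B 1 1)
        + B 0 2 * (B 0 1 * B 2 2 - B 0 2 * B 2 1))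
        / (B 0 1 * B 0 2 * (h₃ - h₂)))
    (hLtil : Ltil = (B 0 1 * h₃⁻¹ * (B 0 1 * B 1 2 - B 0 2 * B 1 1)
        + B 0 2 * h₂⁻¹ * (B 0 1 * B 2 2 - B 0 2 * B 2 1))
        / (B 0 1 * B 0 2 * (h₃⁻¹ - h₂⁻¹)))
    (hMtil : Mtil = -(B 0 1 * (B 0 1 * B 1 2 - B 0 2 * B 1 1)
        + B 0 2 * (B 0 1 * B 2 2 - B 0 2 * B 2 1))
        / (B 0 1 * B 0 2 * (h₃⁻¹ - h₂⁻¹))) :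
    Ltil = L + M * (h₂ + h₃) ∧ Mtil = -(h₂ * h₃) * M := by
  subst hL hM hLtil hMtil
  exact ⟨distinguishedL_inv h₂0 h₃0 B, distinguishedM_inv h₂0 h₃0 B⟩

/-- inversion of the first matrix, transformation of the
distinguished point: Ltil = L + M(h₂+h₃), Mtil = −h₂h₃M. -/
theorem inversion_distinguished_point
    (h₁ h₂ h₃ : ℂ) (B : Matrix (Fin 3) (Fin 3) ℂ)
    (hu : B 0 1 * B 0 2 ≠ 0) (h23 : h₂ ≠ h₃)
    (h₁0 : h₁ ≠ 0) (h₂0 : h₂ ≠ 0) (h₃0 : h₃ ≠ 0)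
    (L M Ltil Mtil : ℂ)
    (hL : L = (B 0 1 * h₃ * (B 0 1 * B 1 2 - B 0 2 * B 1 1)
        + B 0 2 * h₂ * (B 0 1 * B 2 2 - B 0 2 * B 2 1))
        / (B 0 1 * B 0 2 * (h₃ - h₂)))
    (hM : M = -(B 0 1 * (B 0 1 * B 1 2 - B 0 2 * B 1 1)
        + B 0 2 * (B 0 1 * B 2 2 - B 0 2 * B 2 1))
        / (B 0 1 * B 0 2 * (h₃ - h₂)))
    (hLtil : Ltil = (B 0 1 * h₃⁻¹ * (B 0 1 * B 1 2 - B 0 2 * B 1 1)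
        + B 0 2 * h₂⁻¹ * (B 0 1 * B 2 2 - B 0 2 * B 2 1))
        / (B 0 1 * B 0 2 * (h₃⁻¹ - h₂⁻¹)))
    (hMtil : Mtil = -(B 0 1 * (B 0 1 * B 1 2 - B 0 2 * B 1 1)
        + B 0 2 * (B 0 1 * B 2 2 - B 0 2 * B 2 1))
        / (B 0 1 * B 0 2 * (h₃⁻¹ - h₂⁻¹))) :
    Ltil = L + M * (h₂ + h₃) ∧ Mtil = -(h₂ * h₃) * M :=
  inversion_distinguished_point_general h₂ h₃ B h₂0 h₃0 L M Ltil Mtil hL hM hLtil hMtil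
end

section
/- (The transformation (A,B) ↦ (A,AB): coefficients.) Write det(λI + μA + ν·AB) = λ³ + d₁*μ³ + d₂*ν³ + p₊*λ²μ + p₋*λμ² + q₊*λ²ν + q₋*λν² + r₊*μ²ν + r₋*μν² + t*·λμν. Then d₁* = d₁, p₊* = p₊, p₋* = p₋, d₂* = d₁d₂, q₊* = q₊p₊ − t, r₊* = d₁q₊, r₋* = d₁q₋, and t* = p₋q₊ − r₊. -/
open Matrix

/-- the transformation (A,B) ↦ (A,AB), coefficients of the new
spectral polynomial det(λI + μA + ν·AB). -/
theorem third_generator_coefficients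
    (h₁ h₂ h₃ : ℂ) (B : Matrix (Fin 3) (Fin 3) ℂ)
    (A : Matrix (Fin 3) (Fin 3) ℂ) (hA : A = Matrix.diagonal ![h₁, h₂, h₃])
    (d₁ d₂ pP pMi qP qMi rP rMi t : ℂ)
    (hspec : ∀ lam mu nu : ℂ,
      (lam • (1 : Matrix (Fin 3) (Fin 3) ℂ) + mu • A + nu • B).det
        = lam ^ 3 + d₁ * mu ^ 3 + d₂ * nu ^ 3
          + pP * lam ^ 2 * mu + pMi * lam * mu ^ 2
          + qP * lam ^ 2 * nu + qMi * lam * nu ^ 2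
          + rP * mu ^ 2 * nu + rMi * mu * nu ^ 2
          + t * lam * mu * nu)
    (d₁s d₂s pPs pMis qPs qMis rPs rMis ts : ℂ)
    (hspec' : ∀ lam mu nu : ℂ,
      (lam • (1 : Matrix (Fin 3) (Fin 3) ℂ) + mu • A + nu • (A * B)).det
        = lam ^ 3 + d₁s * mu ^ 3 + d₂s * nu ^ 3
          + pPs * lam ^ 2 * mu + pMis * lam * mu ^ 2
          + qPs * lam ^ 2 * nu + qMis * lam * nu ^ 2
          + rPs * mu ^ 2 * nu + rMis * mu * nu ^ 2
          + ts * lam * mu * nu) :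
    d₁s = d₁ ∧ pPs = pP ∧ pMis = pMi ∧ d₂s = d₁ * d₂
      ∧ qPs = qP * pP - t ∧ rPs = d₁ * qP ∧ rMis = d₁ * qMi
      ∧ ts = pMi * qP - rP := by
  subst hA
  have e1 := hspec 0 1 0
  have e2 := hspec 0 0 1
  have e3 := hspec 1 1 0
  have e4 := hspec 1 (-1) 0
  have e5 := hspec 1 0 1
  have e6 := hspec 1 0 (-1)
  have e7 := hspec 0 1 1
  have e8 := hspec 0 1 (-1)
  have e9 := hspec 1 1 1
  have f1 := hspec' 0 1 0
  have f2 := hspec' 0 0 1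
  have f3 := hspec' 1 1 0
  have f4 := hspec' 1 (-1) 0
  have f5 := hspec' 1 0 1
  have f6 := hspec' 1 0 (-1)
  have f7 := hspec' 0 1 1
  have f8 := hspec' 0 1 (-1)
  have f9 := hspec' 1 1 1
  simp [Matrix.det_fin_three, Matrix.mul_apply, Fin.sum_univ_three,
    Matrix.diagonal] at e1 e2 e3 e4 e5 e6 e7 e8 e9 f1 f2 f3 f4 f5 f6 f7 f8 f9
  -- abbreviations for entries of B
  set b00 := B 0 0; set b01 := B 0 1; set b02 := B 0 2
  set b10 := B 1 0; set b11 := B 1 1; set b12 := B 1 2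
  set b20 := B 2 0; set b21 := B 2 1; set b22 := B 2 2
  have hd₁ : d₁ = h₁ * h₂ * h₃ := by linear_combination -e1
  have hd₂ : d₂ = b00 * (b11 * b22 - b12 * b21) - b01 * (b10 * b22 - b12 * b20)
      + b02 * (b10 * b21 - b11 * b20) := by linear_combination -e2
  have hpP : pP = h₁ + h₂ + h₃ := by linear_combination (e4 - e3) / 2 + e1
  have hpMi : pMi = h₁ * h₂ + h₁ * h₃ + h₂ * h₃ := by
    linear_combination (-e3 - e4) / 2
  have hqP : qP = b00 + b11 + b22 := by linear_combination (e6 - e5) / 2 + e2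
  have hqMi : qMi = (b00 * b11 - b01 * b10) + (b00 * b22 - b02 * b20)
      + (b11 * b22 - b12 * b21) := by linear_combination (-e5 - e6) / 2
  have hrP : rP = h₂ * h₃ * b00 + h₁ * h₃ * b11 + h₁ * h₂ * b22 := by
    linear_combination (e8 - e7) / 2 + e2
  have hrMi : rMi = h₁ * (b11 * b22 - b12 * b21) + h₂ * (b00 * b22 - b02 * b20)
      + h₃ * (b00 * b11 - b01 * b10) := by
    linear_combination (-e7 - e8) / 2 + e1
  have ht : t = h₁ * (b11 + b22) + h₂ * (b00 + b22) + h₃ * (b00 + b11) := by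
    linear_combination -e9 + e3 + e5 + e7 - e1 - e2
  have hd₁s : d₁s = h₁ * h₂ * h₃ := by linear_combination -f1
  have hd₂s : d₂s = h₁ * h₂ * h₃ * (b00 * (b11 * b22 - b12 * b21)
      - b01 * (b10 * b22 - b12 * b20) + b02 * (b10 * b21 - b11 * b20)) := by
    linear_combination -f2
  have hpPs : pPs = h₁ + h₂ + h₃ := by linear_combination (f4 - f3) / 2 + f1
  have hpMis : pMis = h₁ * h₂ + h₁ * h₃ + h₂ * h₃ := by
    linear_combination (-f3 - f4) / 2
  have hqPs : qPs = h₁ * b00 + h₂ * b11 + h₃ * b22 := by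
    linear_combination (f6 - f5) / 2 + f2
  have hqMis : qMis = h₁ * h₂ * (b00 * b11 - b01 * b10)
      + h₁ * h₃ * (b00 * b22 - b02 * b20)
      + h₂ * h₃ * (b11 * b22 - b12 * b21) := by
    linear_combination (-f5 - f6) / 2
  have hrPs : rPs = h₁ * h₂ * h₃ * (b00 + b11 + b22) := by
    linear_combination (f8 - f7) / 2 + f2
  have hrMis : rMis = h₁ * h₂ * h₃ * ((b00 * b11 - b01 * b10)
      + (b00 * b22 - b02 * b20) + (b11 * b22 - b12 * b21)) := by
    linear_combination (-f7 - f8) / 2 + f1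
  have hts : ts = h₁ * (h₂ * b11 + h₃ * b22) + h₂ * (h₁ * b00 + h₃ * b22)
      + h₃ * (h₁ * b00 + h₂ * b11) := by
    linear_combination -f9 + f3 + f5 + f7 - f1 - f2
  subst hd₁ hd₂ hpP hpMi hqP hqMi hrP hrMi ht
  subst hd₁s hd₂s hpPs hpMis hqPs hqMis hrPs hrMis hts
  refine ⟨by ring, by ring, by ring, by ring, by ring, by ring, by ring, by ring⟩
end

section
/- (The transformation (A,B) ↦ (A,AB): transformation of the distinguished point.) Assume u₁₂u₁₃ ≠ 0, h₂ ≠ h₃, and h₁ ≠ 0. Let L* and M* denote the quantities L and M computed for the pair (A, AB), i.e. with each entry u_{ij} replaced by the (i,j) entry h_i u_{ij} of AB (and the same h₁, h₂, h₃). Then L* = −h₂h₃M and M* = L + M(h₂+h₃). -/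
open Matrix

/-- the transformation (A,B) ↦ (A,AB), transformation of the
distinguished point: L* = −h₂h₃M, M* = L + M(h₂+h₃), where L*, M* are
computed with the entries h_i u_{ij} of AB. -/
theorem third_generator_distinguished_point
    (h₁ h₂ h₃ : ℂ) (B : Matrix (Fin 3) (Fin 3) ℂ)
    (hu : B 0 1 * B 0 2 ≠ 0) (h23 : h₂ ≠ h₃) (h₁0 : h₁ ≠ 0)
    (L M Ls Ms : ℂ)
    (hL : L = (B 0 1 * h₃ * (B 0 1 * B 1 2 - B 0 2 * B 1 1)
        + B 0 2 * h₂ * (B 0 1 * B 2 2 - B 0 2 * B 2 1))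
        / (B 0 1 * B 0 2 * (h₃ - h₂)))
    (hM : M = -(B 0 1 * (B 0 1 * B 1 2 - B 0 2 * B 1 1)
        + B 0 2 * (B 0 1 * B 2 2 - B 0 2 * B 2 1))
        / (B 0 1 * B 0 2 * (h₃ - h₂)))
    (hLs : Ls = ((h₁ * B 0 1) * h₃ * ((h₁ * B 0 1) * (h₂ * B 1 2) - (h₁ * B 0 2) * (h₂ * B 1 1))
        + (h₁ * B 0 2) * h₂ * ((h₁ * B 0 1) * (h₃ * B 2 2) - (h₁ * B 0 2) * (h₃ * B 2 1)))
        / ((h₁ * B 0 1) * (h₁ * B 0 2) * (h₃ - h₂)))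
    (hMs : Ms = -((h₁ * B 0 1) * ((h₁ * B 0 1) * (h₂ * B 1 2) - (h₁ * B 0 2) * (h₂ * B 1 1))
        + (h₁ * B 0 2) * ((h₁ * B 0 1) * (h₃ * B 2 2) - (h₁ * B 0 2) * (h₃ * B 2 1)))
        / ((h₁ * B 0 1) * (h₁ * B 0 2) * (h₃ - h₂))) :
    Ls = -(h₂ * h₃) * M ∧ Ms = L + M * (h₂ + h₃) := by
  have h1 : B 0 1 ≠ 0 := fun h => hu (by rw [h]; ring)
  have h2 : B 0 2 ≠ 0 := fun h => hu (by rw [h]; ring)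
  have h3 : h₃ - h₂ ≠ 0 := sub_ne_zero.2 (Ne.symm h23)
  subst hL hM hLs hMs
  constructor <;> field_simp <;> ring
end
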